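/- arXiv:1510.07565 — 5 statements merged into one kernel-verified Lean document; each statement's English description precedes it below -/
import Mathlib

section
/- Let G be a weighted directed graph with weights in a unital quantale Σ, let u and v be nodes of G, and let S be a set of nodes of G such that every path from u to v in G contains at least one node of S. Then d(u, v) = ⨆_{x ∈ S} d(u, x) ⊗ d(x, v). -/
/-- A path from `u` to `v` in the directed graph with edge relation `E`:
a nonempty list of nodes starting at `u`, ending at `v`, with consecutive
nodes related by `E`. A single node is a path of length 0. -/
def IsPath {V : Type*} (E : V → V → Prop) (u v : V) (l : List V) : Prop :=
  l ≠ [] ∧ l.head? = some u ∧ l.getLast? = some v ∧ l.Chain' E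

/-- The weight of a path: the ordered product of the weights of its edges,
`1` for a 0-length path. -/
def pathWeight {V M : Type*} [Monoid M] (wt : V → V → M) (l : List V) : M :=
  ((l.zip l.tail).map fun p => wt p.1 p.2).prod

/-- The algebraic distance: supremum of the weights of all paths from `u` to `v`
(the supremum of the empty set being the bottom element). -/
def gdist {V Q : Type*} [CompleteLattice Q] [Monoid Q]
    (E : V → V → Prop) (wt : V → V → Q) (u v : V) : Q :=
  ⨆ l ∈ {l : List V | IsPath E u v l}, pathWeight wt l

/-! Cutting a path from `u` to `v` at an occurrence of `x` gives a path from `u` to `x` and one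
from `x` to `v` whose weights multiply to the weight of the whole path, and conversely two such
paths glue together. Hence every path weight is bounded by some `d(u, x) ⊗ d(x, v)` with `x ∈ S`
(monotonicity of `⊗`), while distributivity of `⊗` over suprema, used in the form of
residuation, gives the triangle inequality `d(u, x) ⊗ d(x, v) ≤ d(u, v)`. -/

section Paths

variable {V : Type*} {E : V → V → Prop} {u v x : V} {l : List V}

lemma IsPath.exists_eq_cons (h : IsPath E u v l) : ∃ q, l = u :: q :=
  List.head?_eq_some_iff.1 h.2.1

lemma IsPath.exists_eq_append_singleton (h : IsPath E u v l) : ∃ p, l = p ++ [v] :=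
  List.getLast?_eq_some_iff.1 h.2.2.1

lemma isPath_append_cons_iff {p q : List V} :
    IsPath E u v (p ++ x :: q) ↔ IsPath E u x (p ++ [x]) ∧ IsPath E x v (x :: q) := by
  simp only [IsPath, List.Chain']
  rw [List.isChain_split]
  simp [List.head?_append, List.getLast?_append, and_assoc, and_left_comm]

end Paths

lemma pathWeight_cons_cons {V M : Type*} [Monoid M] (wt : V → V → M) (a b : V) (l : List V) :
    pathWeight wt (a :: b :: l) = wt a b * pathWeight wt (b :: l) := by
  simp [pathWeight]

lemma pathWeight_append_cons {V M : Type*} [Monoid M] (wt : V → V → M) (x : V) (p q : List V) :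
    pathWeight wt (p ++ x :: q) = pathWeight wt (p ++ [x]) * pathWeight wt (x :: q) := by
  induction p with
  | nil => simp [pathWeight]
  | cons a p ih =>
    cases p with
    | nil => simp [pathWeight]
    | cons b p => simp only [List.cons_append, pathWeight_cons_cons] at ih ⊢; rw [ih, mul_assoc]

section Distance

variable {V Q : Type*} [CompleteLattice Q] [Monoid Q] {E : V → V → Prop} {wt : V → V → Q}
  {u v x : V}

lemma pathWeight_le_gdist {l : List V} (h : IsPath E u v l) : pathWeight wt l ≤ gdist E wt u v :=
  le_iSup₂ (f := fun l (_ : l ∈ {l : List V | IsPath E u v l}) => pathWeight wt l) l h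

lemma gdist_le_iSup_of_forall_isPath_exists_mem [MulLeftMono Q] [MulRightMono Q] {S : Set V}
    (hS : ∀ l : List V, IsPath E u v l → ∃ x ∈ l, x ∈ S) :
    gdist E wt u v ≤ ⨆ x ∈ S, gdist E wt u x * gdist E wt x v := by
  refine iSup₂_le fun l hl => ?_
  obtain ⟨x, hxl, hxS⟩ := hS l hl
  obtain ⟨p, q, rfl⟩ := List.append_of_mem hxl
  obtain ⟨hux, hxv⟩ := isPath_append_cons_iff.1 hl
  calc pathWeight wt (p ++ x :: q) = pathWeight wt (p ++ [x]) * pathWeight wt (x :: q) :=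
        pathWeight_append_cons wt x p q
    _ ≤ gdist E wt u x * gdist E wt x v :=
        mul_le_mul' (pathWeight_le_gdist hux) (pathWeight_le_gdist hxv)
    _ ≤ ⨆ x ∈ S, gdist E wt u x * gdist E wt x v :=
        le_iSup₂ (f := fun x (_ : x ∈ S) => gdist E wt u x * gdist E wt x v) x hxS

lemma gdist_mul_gdist_le [IsQuantale Q] : gdist E wt u x * gdist E wt x v ≤ gdist E wt u v := by
  rw [← Quantale.leftMulResiduation_le_iff_mul_le]
  refine iSup₂_le fun l₁ hux => ?_
  rw [Quantale.leftMulResiduation_le_iff_mul_le, ← Quantale.rightMulResiduation_le_iff_mul_le]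
  refine iSup₂_le fun l₂ hxv => ?_
  rw [Quantale.rightMulResiduation_le_iff_mul_le]
  obtain ⟨p, rfl⟩ := hux.exists_eq_append_singleton
  obtain ⟨q, rfl⟩ := hxv.exists_eq_cons
  rw [← pathWeight_append_cons]
  exact pathWeight_le_gdist (isPath_append_cons_iff.2 ⟨hux, hxv⟩)

end Distance

/-- Let G be a weighted directed graph with weights in a unital quantale Σ,
let u and v be nodes of G, and let S be a set of nodes of G such that every path from u
to v in G contains at least one node of S. Then d(u, v) = ⨆_{x ∈ S} d(u, x) ⊗ d(x, v). -/
theorem stmt_3 {V Q : Type*} [CompleteLattice Q] [Monoid Q]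
    (hdl : ∀ (a : Q) (S : Set Q), a * sSup S = ⨆ s ∈ S, a * s)
    (hdr : ∀ (a : Q) (S : Set Q), sSup S * a = ⨆ s ∈ S, s * a)
    (E : V → V → Prop) (wt : V → V → Q) (u v : V) (S : Set V)
    (hS : ∀ l : List V, IsPath E u v l → ∃ x ∈ l, x ∈ S) :
    gdist E wt u v = ⨆ x ∈ S, gdist E wt u x * gdist E wt x v := by
  have : IsQuantale Q := ⟨hdl, fun s a => hdr a s⟩
  exact le_antisymm (gdist_le_iSup_of_forall_isPath_exists_mem hS)
    (iSup₂_le fun _ _ => gdist_mul_gdist_le)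
end

section
/- Let p ≥ 0, a > 0 and 0 < q < 1 be real numbers with a·q^p < 1, and let M ≥ 0. If f : [0, ∞) → [0, ∞) satisfies f(x) ≤ M for all 0 ≤ x ≤ 1 and f(x) ≤ x^p + a·f(q·x) for all x ≥ 1, then there exists a constant C such that f(x) ≤ C·x^p for all x ≥ 1. -/
/-!
Pick `C ≥ 1 + a M` with `1 + (a q^p) C ≤ C`, possible because `a q^p < 1`.
If `q x < 1` the recursion and `f ≤ M` on `[0, 1]` give `f x ≤ (1 + a M) x^p`; otherwise
`f x ≤ x^p + a C (q x)^p = (1 + a q^p C) x^p ≤ C x^p` from the bound at `q x`.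
Since `q^n x < 1` for large `n`, induction on `n` covers all of `[1, ∞)`.
-/

theorem scaling_induction {q : ℝ} (hq1 : q < 1) {P : ℝ → Prop}
    (base : ∀ x, 1 ≤ x → q * x < 1 → P x)
    (step : ∀ x, 1 ≤ x → 1 ≤ q * x → P (q * x) → P x) :
    ∀ x, 1 ≤ x → P x := by
  have of_pow_mul_lt_one : ∀ n : ℕ, ∀ x, 1 ≤ x → q ^ n * x < 1 → P x := by
    intro n
    induction n with
    | zero => intro x hx hlt; simp at hlt; linarith
    | succ n ih =>
      intro x hx hlt
      rcases lt_or_ge (q * x) 1 with hqx | hqx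
      · exact base x hx hqx
      · exact step x hx hqx (ih (q * x) hqx (by rwa [← mul_assoc, ← pow_succ]))
  intro x hx
  have hx0 : 0 < x := zero_lt_one.trans_le hx
  obtain ⟨n, hn⟩ := exists_pow_lt_of_lt_one (inv_pos.2 hx0) hq1
  exact of_pow_mul_lt_one n x hx ((lt_mul_inv_iff₀ hx0).1 (by rwa [one_mul]))

theorem one_add_mul_le_of_inv_one_sub_le {r C : ℝ} (hr : r < 1) (hC : (1 - r)⁻¹ ≤ C) :
    1 + r * C ≤ C := by
  have := (inv_le_iff_one_le_mul₀' (sub_pos.2 hr)).1 hC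
  linarith

theorem stmt_9_general (p a q M : ℝ) (hp : 0 ≤ p) (ha : 0 < a) (hq0 : 0 < q) (hq1 : q < 1)
    (hqa : a * q ^ p < 1) (hM : 0 ≤ M)
    (f : ℝ → ℝ)
    (hf1 : ∀ x, 0 ≤ x → x ≤ 1 → f x ≤ M)
    (hrec : ∀ x, 1 ≤ x → f x ≤ x ^ p + a * f (q * x)) :
    ∃ C : ℝ, ∀ x, 1 ≤ x → f x ≤ C * x ^ p := by
  set C := max (1 + a * M) (1 - a * q ^ p)⁻¹
  refine ⟨C, scaling_induction hq1 ?_ ?_⟩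
  · intro x hx hqx
    have hfqx : f (q * x) ≤ M := hf1 (q * x) (by positivity) hqx.le
    have hxp : 1 ≤ x ^ p := Real.one_le_rpow hx hp
    calc f x ≤ x ^ p + a * M := by grw [hrec x hx, hfqx]
      _ ≤ (1 + a * M) * x ^ p := by nlinarith [mul_nonneg ha.le hM]
      _ ≤ C * x ^ p := by gcongr; exact le_max_left _ _
  · intro x hx _ ih
    calc f x ≤ x ^ p + a * (C * (q * x) ^ p) := by grw [hrec x hx, ih]
      _ = (1 + a * q ^ p * C) * x ^ p := by
        rw [Real.mul_rpow hq0.le (by linarith)]; ring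
      _ ≤ C * x ^ p := by
        gcongr
        exact one_add_mul_le_of_inv_one_sub_le hqa (le_max_right _ _)

/-- Let p ≥ 0, a > 0 and 0 < q < 1 be real numbers with a·q^p < 1,
and let M ≥ 0. If f : [0, ∞) → [0, ∞) satisfies f(x) ≤ M for all 0 ≤ x ≤ 1 and
f(x) ≤ x^p + a·f(q·x) for all x ≥ 1, then there exists a constant C such that
f(x) ≤ C·x^p for all x ≥ 1. -/
theorem stmt_9 (p a q M : ℝ) (hp : 0 ≤ p) (ha : 0 < a) (hq0 : 0 < q) (hq1 : q < 1)
    (hqa : a * q ^ p < 1) (hM : 0 ≤ M)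
    (f : ℝ → ℝ) (hfnn : ∀ x, 0 ≤ x → 0 ≤ f x)
    (hf1 : ∀ x, 0 ≤ x → x ≤ 1 → f x ≤ M)
    (hrec : ∀ x, 1 ≤ x → f x ≤ x ^ p + a * f (q * x)) :
    ∃ C : ℝ, ∀ x, 1 ≤ x → f x ≤ C * x ^ p :=
  stmt_9_general p a q M hp ha hq0 hq1 hqa hM f hf1 hrec
end

section
/- Fix a real ε with 0 < ε ≤ 1, a natural number λ with λ ≥ 4/ε, a real δ with 0 < δ ≤ ε/18, and an integer k ≥ 2, and set q = ((1+δ)/2)^(λ−1). If f : [0, ∞) → [0, ∞) is bounded on [0, 1] and satisfies f(x) ≤ x^(3·(k−1)) + 2^(λ·k) · f(q·x) for all x ≥ 1, then there exists a constant C such that f(x) ≤ C · x^(3·(k−1)) for all x ≥ 1. -/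
/-!
Iterating the recursion until `qⁿ x ≤ 1` bounds `f x` by `x^(3(k-1))` times a geometric series
with ratio `r = 2^(λk) q^(3(k-1))`, plus a term coming from the bound of `f` on `[0, 1]`. The
series converges: with `m = λ - 1 ≥ 3` and `n = k - 1 ≥ 1`,
`log r = (m+1)(n+1) log 2 + 3mn (log (1+δ) - log 2) ≤ -(mn/3) log 2 + mn/6 < 0`.
-/

section Growth

variable {f : ℝ → ℝ} {a c q M C : ℝ}

theorem le_add_mul_rpow_of_pow_mul_le_one (ha : 0 ≤ a) (hc : 0 ≤ c) (hq : 0 ≤ q)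
    (hM0 : 0 ≤ M) (hC0 : 0 ≤ C) (hC : 1 + c * M + c * C * q ^ a ≤ C)
    (hM : ∀ x, 0 ≤ x → x ≤ 1 → f x ≤ M)
    (hrec : ∀ x, 1 ≤ x → f x ≤ x ^ a + c * f (q * x)) (n : ℕ) :
    ∀ x, 0 ≤ x → q ^ n * x ≤ 1 → f x ≤ M + C * x ^ a := by
  have hsmall : ∀ x, 0 ≤ x → x ≤ 1 → f x ≤ M + C * x ^ a := fun x hx0 hx1 =>
    (hM x hx0 hx1).trans (le_add_of_nonneg_right (by positivity))
  induction n with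
  | zero => exact fun x hx0 hx1 => hsmall x hx0 (by simpa using hx1)
  | succ n ih =>
    intro x hx0 hqx
    rcases le_total x 1 with hx1 | hx1
    · exact hsmall x hx0 hx1
    have hxa : 1 ≤ x ^ a := Real.one_le_rpow hx1 ha
    have hf : f (q * x) ≤ M + C * (q ^ a * x ^ a) := by
      rw [← Real.mul_rpow hq hx0]
      exact ih _ (by positivity) (by rwa [← mul_assoc, ← pow_succ])
    calc f x ≤ x ^ a + c * (M + C * (q ^ a * x ^ a)) :=
          (hrec x hx1).trans (by gcongr)
      _ ≤ (1 + c * M + c * C * q ^ a) * x ^ a := by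
          nlinarith [mul_le_mul_of_nonneg_left hxa (mul_nonneg hc hM0)]
      _ ≤ C * x ^ a := by gcongr
      _ ≤ M + C * x ^ a := le_add_of_nonneg_left hM0

theorem exists_le_mul_rpow_of_le_rpow_add_mul_comp (ha : 0 ≤ a) (hc : 0 ≤ c) (hq0 : 0 ≤ q)
    (hq1 : q < 1) (hcq : c * q ^ a < 1) (hM : ∀ x, 0 ≤ x → x ≤ 1 → f x ≤ M)
    (hrec : ∀ x, 1 ≤ x → f x ≤ x ^ a + c * f (q * x)) :
    ∃ C, ∀ x, 1 ≤ x → f x ≤ C * x ^ a := by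
  set M' := max M 0
  have hM' : ∀ x, 0 ≤ x → x ≤ 1 → f x ≤ M' := fun x hx0 hx1 =>
    (hM x hx0 hx1).trans (le_max_left _ _)
  have hM'0 : 0 ≤ M' := le_max_right _ _
  -- `C` is the fixed point of `C ↦ 1 + c * M' + c * q ^ a * C`
  set C := (1 + c * M') / (1 - c * q ^ a)
  have hcq' : 0 < 1 - c * q ^ a := by linarith
  have hC0 : 0 ≤ C := div_nonneg (by positivity) hcq'.le
  have hC : 1 + c * M' + c * C * q ^ a ≤ C := by
    have : C * (1 - c * q ^ a) = 1 + c * M' := div_mul_cancel₀ _ hcq'.ne'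
    linarith
  refine ⟨M' + C, fun x hx => ?_⟩
  have hx0 : 0 < x := by linarith
  obtain ⟨n, hn⟩ := exists_pow_lt_of_lt_one (one_div_pos.2 hx0) hq1
  have hqx : q ^ n * x ≤ 1 := ((lt_div_iff₀ hx0).1 hn).le
  calc f x ≤ M' + C * x ^ a :=
        le_add_mul_rpow_of_pow_mul_le_one ha hc hq0 hM'0 hC0 hC hM' hrec n x hx0.le hqx
    _ ≤ (M' + C) * x ^ a := by nlinarith [Real.one_le_rpow hx ha]

end Growth

theorem two_pow_mul_pow_lt_one {δ : ℝ} (hδ0 : 0 < δ) (hδ : δ ≤ 1 / 18) {m n : ℕ} (hm : 3 ≤ m)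
    (hn : 1 ≤ n) : (2 : ℝ) ^ ((m + 1) * (n + 1)) * ((1 + δ) / 2) ^ (m * (3 * n)) < 1 := by
  rw [← Real.log_neg_iff (by positivity), Real.log_mul (by positivity) (by positivity),
    Real.log_pow, Real.log_pow, Real.log_div (by positivity) two_ne_zero]
  have hlog : Real.log (1 + δ) ≤ δ := by
    linarith [Real.log_le_sub_one_of_pos (by positivity : 0 < 1 + δ)]
  have hlog2 := Real.log_two_gt_d9
  have hm' : (3 : ℝ) ≤ m := by exact_mod_cast hm
  have hn' : (1 : ℝ) ≤ n := by exact_mod_cast hn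
  push_cast
  nlinarith [mul_le_mul_of_nonneg_left hδ (by positivity : (0:ℝ) ≤ m * n),
    mul_le_mul_of_nonneg_left hlog (by positivity : (0:ℝ) ≤ m * n),
    mul_le_mul_of_nonneg_left hlog2.le (by nlinarith : (0:ℝ) ≤ 2 * m * n - m - n - 1 - m * n / 3),
    mul_le_mul_of_nonneg_left hlog2.le (by positivity : (0:ℝ) ≤ m * n)]

theorem stmt_10_general (ε : ℝ) (hε0 : 0 < ε) (hε1 : ε ≤ 1)
    (lam : ℕ) (hlam : (4 : ℝ) / ε ≤ (lam : ℝ))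
    (δ : ℝ) (hδ0 : 0 < δ) (hδ : δ ≤ ε / 18)
    (k : ℕ) (hk : 2 ≤ k)
    (q : ℝ) (hq : q = ((1 + δ) / 2) ^ (lam - 1))
    (f : ℝ → ℝ)
    (hbdd : ∃ M : ℝ, ∀ x, 0 ≤ x → x ≤ 1 → f x ≤ M)
    (hrec : ∀ x, 1 ≤ x → f x ≤ x ^ (3 * ((k : ℝ) - 1)) + (2 : ℝ) ^ (lam * k) * f (q * x)) :
    ∃ C : ℝ, ∀ x, 1 ≤ x → f x ≤ C * x ^ (3 * ((k : ℝ) - 1)) := by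
  obtain ⟨M, hM⟩ := hbdd
  have hlam4 : 4 ≤ lam := by exact_mod_cast (le_div_self (by norm_num) hε0 hε1).trans hlam
  obtain ⟨m, rfl⟩ : ∃ m, lam = m + 1 := ⟨lam - 1, by omega⟩
  obtain ⟨n, rfl⟩ : ∃ n, k = n + 1 := ⟨k - 1, by omega⟩
  rw [Nat.add_sub_cancel] at hq
  have hq0 : 0 ≤ q := hq ▸ by positivity
  have hq1 : q < 1 := hq ▸ pow_lt_one₀ (by positivity) (by linarith) (by omega)
  have hqa : q ^ (3 * (((n + 1 : ℕ) : ℝ) - 1)) = ((1 + δ) / 2) ^ (m * (3 * n)) := by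
    rw [show 3 * (((n + 1 : ℕ) : ℝ) - 1) = ((3 * n : ℕ) : ℝ) by push_cast; ring,
      Real.rpow_natCast, hq, ← pow_mul]
  have hratio : (2 : ℝ) ^ ((m + 1) * (n + 1)) * q ^ (3 * (((n + 1 : ℕ) : ℝ) - 1)) < 1 :=
    hqa ▸ two_pow_mul_pow_lt_one hδ0 (by linarith) (by omega) (by omega)
  have ha : 0 ≤ 3 * (((n + 1 : ℕ) : ℝ) - 1) := by
    rw [Nat.cast_succ, add_sub_cancel_right]; positivity
  exact exists_le_mul_rpow_of_le_rpow_add_mul_comp ha (by positivity) hq0 hq1 hratio hM hrec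

/-- Fix a real ε with 0 < ε ≤ 1, a natural number λ with λ ≥ 4/ε,
a real δ with 0 < δ ≤ ε/18, and an integer k ≥ 2, and set q = ((1+δ)/2)^(λ−1).
If f : [0, ∞) → [0, ∞) is bounded on [0, 1] and satisfies
f(x) ≤ x^(3·(k−1)) + 2^(λ·k) · f(q·x) for all x ≥ 1,
then there exists a constant C such that f(x) ≤ C · x^(3·(k−1)) for all x ≥ 1. -/
theorem stmt_10 (ε : ℝ) (hε0 : 0 < ε) (hε1 : ε ≤ 1)
    (lam : ℕ) (hlam : (4 : ℝ) / ε ≤ (lam : ℝ))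
    (δ : ℝ) (hδ0 : 0 < δ) (hδ : δ ≤ ε / 18)
    (k : ℕ) (hk : 2 ≤ k)
    (q : ℝ) (hq : q = ((1 + δ) / 2) ^ (lam - 1))
    (f : ℝ → ℝ) (hfnn : ∀ x, 0 ≤ x → 0 ≤ f x)
    (hbdd : ∃ M : ℝ, ∀ x, 0 ≤ x → x ≤ 1 → f x ≤ M)
    (hrec : ∀ x, 1 ≤ x → f x ≤ x ^ (3 * ((k : ℝ) - 1)) + (2 : ℝ) ^ (lam * k) * f (q * x)) :
    ∃ C : ℝ, ∀ x, 1 ≤ x → f x ≤ C * x ^ (3 * ((k : ℝ) - 1)) :=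
  stmt_10_general ε hε0 hε1 lam hlam δ hδ0 hδ k hk q hq f hbdd hrec
end

section
/- Fix a real ε with 0 < ε ≤ 1, a natural number λ with λ ≥ 4/ε, and a real δ with 0 < δ ≤ ε/18, and set q = ((1+δ)/2)^(λ−1). If f : [0, ∞) → [0, ∞) is bounded on [0, 1] and satisfies f(x) ≤ x^(2+ε) + 2^(2·λ) · f(q·x) for all x ≥ 1, then there exists a constant C such that f(x) ≤ C · x^(2+ε) for all x ≥ 1. -/
/-!
Write `A = 2^(2λ)` and `k = A q^(2+ε)`. If `f ≤ M` on `[0, 1]`, iterating the recursion along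
`x, qx, q²x, …` until the argument drops into `[0, 1]` gives `f x ≤ M + C x^(2+ε)` for every
`C ≥ 0` with `1 + A M + k C ≤ C`, and such a `C` exists as soon as `k < 1`. Taking logarithms, `log k` is at most
`(2+ε)(λ-1) δ - (ελ - 2 - ε) log 2 ≤ ελ/6 - (ελ - 3) log 2`, which is negative because `ελ ≥ 4`.
-/

open Real

lemma le_add_mul_rpow_of_le_rpow_add_mul {f : ℝ → ℝ} {p q A M C : ℝ} (hp : 0 ≤ p)
    (hq0 : 0 ≤ q) (hq1 : q < 1) (hA : 0 ≤ A) (hM0 : 0 ≤ M) (hC0 : 0 ≤ C)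
    (hC : 1 + A * M + A * q ^ p * C ≤ C) (hM : ∀ x, 0 ≤ x → x ≤ 1 → f x ≤ M)
    (hrec : ∀ x, 1 ≤ x → f x ≤ x ^ p + A * f (q * x)) {x : ℝ} (hx : 1 ≤ x) :
    f x ≤ M + C * x ^ p := by
  have iterate : ∀ n : ℕ, ∀ y, 0 ≤ y → q ^ n * y ≤ 1 → f y ≤ M + C * y ^ p := by
    intro n
    induction n with
    | zero =>
      intro y hy0 hy
      nlinarith [hM y hy0 (by simpa using hy), rpow_nonneg hy0 p]
    | succ n ih =>
      intro y hy0 hy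
      rcases le_or_gt y 1 with hy1 | hy1
      · nlinarith [hM y hy0 hy1, rpow_nonneg hy0 p]
      · have hqy := ih (q * y) (by positivity) (by rwa [← mul_assoc, ← pow_succ])
        rw [mul_rpow hq0 hy0] at hqy
        have hyp : 1 ≤ y ^ p := one_le_rpow hy1.le hp
        calc f y ≤ y ^ p + A * (M + C * (q ^ p * y ^ p)) :=
              (hrec y hy1.le).trans (by gcongr)
          _ ≤ (1 + A * M + A * q ^ p * C) * y ^ p := by nlinarith [mul_nonneg hA hM0]
          _ ≤ M + C * y ^ p := by nlinarith
  have hx0 : 0 < x := by linarith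
  obtain ⟨n, hn⟩ := exists_pow_lt_of_lt_one (inv_pos.2 hx0) hq1
  refine iterate n x hx0.le ?_
  have := mul_lt_mul_of_pos_right hn hx0
  rw [inv_mul_cancel₀ hx0.ne'] at this
  exact this.le

lemma exists_le_mul_rpow_of_le_rpow_add_mul {f : ℝ → ℝ} {p q A M : ℝ} (hp : 0 ≤ p)
    (hq0 : 0 ≤ q) (hq1 : q < 1) (hA : 0 ≤ A) (hk : A * q ^ p < 1)
    (hM : ∀ x, 0 ≤ x → x ≤ 1 → f x ≤ M)
    (hrec : ∀ x, 1 ≤ x → f x ≤ x ^ p + A * f (q * x)) :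
    ∃ C, ∀ x, 1 ≤ x → f x ≤ C * x ^ p := by
  set M' := max M 0
  have hM'0 : 0 ≤ M' := le_max_right _ _
  set C := (1 + A * M') / (1 - A * q ^ p)
  have hC : 1 + A * M' + A * q ^ p * C = C := by
    linarith [div_mul_cancel₀ (1 + A * M') (sub_pos.2 hk).ne']
  have hC0 : 0 ≤ C := div_nonneg (by positivity) (sub_pos.2 hk).le
  refine ⟨M' + C, fun x hx => ?_⟩
  have hbound := le_add_mul_rpow_of_le_rpow_add_mul hp hq0 hq1 hA hM'0 hC0 hC.le
    (fun y hy0 hy1 => (hM y hy0 hy1).trans (le_max_left _ _)) hrec hx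
  nlinarith [one_le_rpow hx hp]

lemma two_pow_mul_rpow_lt_one {ε δ : ℝ} {lam : ℕ} (hε1 : ε ≤ 1)
    (hlam : 4 ≤ ε * lam) (hδ0 : 0 ≤ δ) (hδ : δ ≤ ε / 18) :
    (2 : ℝ) ^ (2 * lam) * (((1 + δ) / 2) ^ (lam - 1)) ^ (2 + ε) < 1 := by
  have hlam_ge : (1 : ℝ) ≤ lam := by nlinarith
  have hlam1 : 1 ≤ lam := by exact_mod_cast hlam_ge
  refine (log_neg_iff (by positivity)).1 ?_
  have hlog : log ((2 : ℝ) ^ (2 * lam) * (((1 + δ) / 2) ^ (lam - 1)) ^ (2 + ε))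
      = (2 + ε) * (lam - 1) * log (1 + δ) - (ε * lam - 2 - ε) * log 2 := by
    rw [log_mul (by positivity) (by positivity), log_rpow (by positivity), log_pow, log_pow,
      log_div (by linarith) two_ne_zero, Nat.cast_sub hlam1]
    push_cast
    ring
  have hlog_le : log (1 + δ) ≤ ε / 18 := by
    linarith [log_le_sub_one_of_pos (by linarith : (0 : ℝ) < 1 + δ)]
  have hlog_nonneg : 0 ≤ log (1 + δ) := log_nonneg (by linarith)
  have hgain : (2 + ε) * (lam - 1) * log (1 + δ) ≤ ε * lam / 6 := by
    calc (2 + ε) * (lam - 1) * log (1 + δ) ≤ 3 * lam * (ε / 18) := by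
          gcongr <;> linarith
      _ = ε * lam / 6 := by ring
  have hloss : (ε * lam - 3) * 0.6931471803 ≤ (ε * lam - 2 - ε) * log 2 := by
    have hlog2 : 0.6931471803 ≤ log 2 := log_two_gt_d9.le
    nlinarith [mul_le_mul_of_nonneg_left hlog2 (by linarith : 0 ≤ ε * lam - 3)]
  rw [hlog]
  linarith

theorem stmt_11_general (ε : ℝ) (hε0 : 0 < ε) (hε1 : ε ≤ 1)
    (lam : ℕ) (hlam : (4 : ℝ) / ε ≤ (lam : ℝ))
    (δ : ℝ) (hδ0 : 0 < δ) (hδ : δ ≤ ε / 18)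
    (q : ℝ) (hq : q = ((1 + δ) / 2) ^ (lam - 1))
    (f : ℝ → ℝ)
    (hbdd : ∃ M : ℝ, ∀ x, 0 ≤ x → x ≤ 1 → f x ≤ M)
    (hrec : ∀ x, 1 ≤ x → f x ≤ x ^ (2 + ε) + (2 : ℝ) ^ (2 * lam) * f (q * x)) :
    ∃ C : ℝ, ∀ x, 1 ≤ x → f x ≤ C * x ^ (2 + ε) := by
  obtain ⟨M, hM⟩ := hbdd
  have hεlam : 4 ≤ ε * lam := by rwa [div_le_iff₀ hε0, mul_comm] at hlam
  have hlam2 : 2 ≤ lam := by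
    have : (2 : ℝ) ≤ lam := by nlinarith
    exact_mod_cast this
  have hq1 : q < 1 := hq ▸ pow_lt_one₀ (by linarith) (by linarith) (by omega)
  have hk := two_pow_mul_rpow_lt_one hε1 hεlam hδ0.le hδ
  rw [← hq] at hk
  exact exists_le_mul_rpow_of_le_rpow_add_mul (by linarith) (hq ▸ by positivity) hq1
    (by positivity) hk hM hrec

/-- Fix a real ε with 0 < ε ≤ 1, a natural number λ with λ ≥ 4/ε,
and a real δ with 0 < δ ≤ ε/18, and set q = ((1+δ)/2)^(λ−1).
If f : [0, ∞) → [0, ∞) is bounded on [0, 1] and satisfies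
f(x) ≤ x^(2+ε) + 2^(2·λ) · f(q·x) for all x ≥ 1,
then there exists a constant C such that f(x) ≤ C · x^(2+ε) for all x ≥ 1. -/
theorem stmt_11 (ε : ℝ) (hε0 : 0 < ε) (hε1 : ε ≤ 1)
    (lam : ℕ) (hlam : (4 : ℝ) / ε ≤ (lam : ℝ))
    (δ : ℝ) (hδ0 : 0 < δ) (hδ : δ ≤ ε / 18)
    (q : ℝ) (hq : q = ((1 + δ) / 2) ^ (lam - 1))
    (f : ℝ → ℝ) (hfnn : ∀ x, 0 ≤ x → 0 ≤ f x)
    (hbdd : ∃ M : ℝ, ∀ x, 0 ≤ x → x ≤ 1 → f x ≤ M)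
    (hrec : ∀ x, 1 ≤ x → f x ≤ x ^ (2 + ε) + (2 : ℝ) ^ (2 * lam) * f (q * x)) :
    ∃ C : ℝ, ∀ x, 1 ≤ x → f x ≤ C * x ^ (2 + ε) :=
  stmt_11_general ε hε0 hε1 lam hlam δ hδ0 hδ q hq f hbdd hrec
end

section
/- Fix n ≥ 1, a directed graph G = (V, E) on the node set V = {x_1, …, x_n}, a unital quantale Σ with multiplication ⊗ and unit 1̄, and edge weights wt(x_i, x_j) ∈ Σ for each edge (x_i, x_j) ∈ E, and let G' be the weighted directed graph of the construction described in the context. Then for all nodes x_i, x_j ∈ V: d_G(x_i, x_j) = d_{G'}(⟨x_i, x_i⟩, ⟨x_j, x_j⟩). -/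
/-- Nodes of the graph G'': `Sum.inl i` is x_{i+1}, `Sum.inr i` is y_{i+1}. -/
abbrev DoubleV (n : ℕ) := Fin n ⊕ Fin n

/-- Nodes of the product graph G': pairs of nodes of G''. -/
abbrev ProdV (n : ℕ) := DoubleV n × DoubleV n

/-- The edge relation of the product graph G' of the construction:
black edges ⟨x_i,y_j⟩ ↔ ⟨x_i,y_{j±1}⟩ and ⟨y_i,x_j⟩ ↔ ⟨y_{i±1},x_j⟩;
blue edges ⟨x_i,x_i⟩ → ⟨x_i,y_i⟩ and ⟨y_i,x_i⟩ → ⟨x_i,x_i⟩;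
red edges ⟨x_i,y_j⟩ → ⟨x_i,x_j⟩ for (x_i,x_j) ∈ E;
green edges ⟨x_i,x_j⟩ → ⟨y_i,x_j⟩ for i ≠ j. -/
def prodE {n : ℕ} (E : Fin n → Fin n → Prop) : ProdV n → ProdV n → Prop :=
  fun a b =>
    match a, b with
    | (Sum.inl i, Sum.inr j), (Sum.inl i', Sum.inr j') =>
        i = i' ∧ ((j : ℕ) + 1 = (j' : ℕ) ∨ (j' : ℕ) + 1 = (j : ℕ))   -- black
    | (Sum.inr i, Sum.inl j), (Sum.inr i', Sum.inl j') =>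
        j = j' ∧ ((i : ℕ) + 1 = (i' : ℕ) ∨ (i' : ℕ) + 1 = (i : ℕ))   -- black
    | (Sum.inl i, Sum.inl j), (Sum.inl i', Sum.inr j') =>
        i = j ∧ i' = i ∧ j' = i                                       -- blue
    | (Sum.inr i, Sum.inl j), (Sum.inl i', Sum.inl j') =>
        i = j ∧ i' = i ∧ j' = i                                       -- blue
    | (Sum.inl i, Sum.inr j), (Sum.inl i', Sum.inl j') =>
        E i j ∧ i' = i ∧ j' = j                                       -- red
    | (Sum.inl i, Sum.inl j), (Sum.inr i', Sum.inl j') =>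
        i ≠ j ∧ i' = i ∧ j' = j                                       -- green
    | _, _ => False

/-- The weight function of the product graph G': the red edge ⟨x_i,y_j⟩ → ⟨x_i,x_j⟩ has
weight wt(x_i, x_j); every other edge has weight 1̄. -/
def prodWt {n : ℕ} {M : Type*} [Monoid M] (wt : Fin n → Fin n → M) :
    ProdV n → ProdV n → M :=
  fun a b =>
    match a, b with
    | (Sum.inl i, Sum.inr _), (Sum.inl _, Sum.inl j) => wt i j
    | _, _ => 1

/-!
Paths of `G` and paths of `G'` between diagonal nodes correspond with the same weights.
An edge `x_a → x_b` of `G` is simulated by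
`⟨x_a,x_a⟩ → ⟨x_a,y_a⟩ ⇝ ⟨x_a,y_b⟩ → ⟨x_a,x_b⟩ → ⟨y_a,x_b⟩ ⇝ ⟨y_b,x_b⟩ → ⟨x_b,x_b⟩`
(`⇝` along black edges; stopping at `⟨x_a,x_b⟩` when `a = b`), whose only edge of weight other
than `1̄` is the red one. Conversely, the projection `⟨x_i,y_j⟩ ↦ x_i`, `⟨_,x_j⟩ ↦ x_j` sends red
edges to edges of `G` and collapses every other edge, all of which have weight `1̄`. So both
distances are suprema of the same set of weights.
-/

open Relation

section PathWeights

variable {V V' M : Type*} [Monoid M]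

inductive IsPathWeight (E : V → V → Prop) (wt : V → V → M) : V → V → M → Prop
  | refl (u : V) : IsPathWeight E wt u u 1
  | cons {u v x : V} {w : M} : E u v → IsPathWeight E wt v x w → IsPathWeight E wt u x (wt u v * w)

namespace IsPathWeight

variable {E : V → V → Prop} {wt : V → V → M} {u v x : V} {w w' : M}

lemma single (h : E u v) (hw : wt u v = w) : IsPathWeight E wt u v w := by
  simpa [hw] using cons h (refl (wt := wt) v)

lemma trans (h : IsPathWeight E wt u v w) (h' : IsPathWeight E wt v x w') :
    IsPathWeight E wt u x (w * w') := by
  induction h with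
  | refl => simpa using h'
  | cons huv _ ih => simpa [mul_assoc] using cons huv (ih h')

lemma of_reflTransGen (h : ReflTransGen (fun a b => E a b ∧ wt a b = 1) u v) :
    IsPathWeight E wt u v 1 := by
  induction h using ReflTransGen.head_induction_on with
  | refl => exact refl _
  | head hab _ ih => simpa [hab.2] using cons hab.1 ih

lemma map {E' : V' → V' → Prop} {wt' : V' → V' → M} (g : V → V')
    (hg : ∀ a b, E a b → IsPathWeight E' wt' (g a) (g b) (wt a b))
    (h : IsPathWeight E wt u v w) : IsPathWeight E' wt' (g u) (g v) w := by
  induction h with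
  | refl u => exact .refl _
  | cons hab _ ih => exact (hg _ _ hab).trans ih

lemma exists_isPath (h : IsPathWeight E wt u v w) : ∃ l, IsPath E u v l ∧ pathWeight wt l = w := by
  induction h with
  | refl u => exact ⟨[u], ⟨by simp, rfl, rfl, List.isChain_singleton u⟩, rfl⟩
  | @cons u _ _ _ huv _ ih =>
    obtain ⟨l, ⟨hne, hhead, hlast, hchain⟩, rfl⟩ := ih
    obtain ⟨v, l, rfl⟩ := List.exists_cons_of_ne_nil hne
    obtain rfl : v = _ := Option.some.inj hhead
    refine ⟨u :: v :: l, ⟨by simp, rfl, ?_, List.isChain_cons_cons.2 ⟨huv, hchain⟩⟩, ?_⟩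
    · rwa [List.getLast?_cons_cons]
    · simp [pathWeight]

end IsPathWeight

lemma IsPath.isPathWeight {E : V → V → Prop} (wt : V → V → M) {u v : V} :
    ∀ {l : List V}, IsPath E u v l → IsPathWeight E wt u v (pathWeight wt l)
  | [], h => absurd rfl h.1
  | [a], ⟨_, hhead, hlast, _⟩ => by
    obtain rfl := Option.some.inj hhead
    obtain rfl := Option.some.inj hlast
    exact .refl a
  | a :: b :: l, ⟨_, hhead, hlast, hchain⟩ => by
    obtain rfl := Option.some.inj hhead
    have hrest : IsPath E b v (b :: l) :=
      ⟨by simp, rfl, by rwa [List.getLast?_cons_cons] at hlast, hchain.tail⟩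
    simpa [pathWeight] using
      IsPathWeight.cons (List.isChain_cons_cons.1 hchain).1 (hrest.isPathWeight wt)

lemma isPathWeight_iff {E : V → V → Prop} {wt : V → V → M} {u v : V} {w : M} :
    IsPathWeight E wt u v w ↔ ∃ l, IsPath E u v l ∧ pathWeight wt l = w :=
  ⟨IsPathWeight.exists_isPath, fun ⟨_, hl, hw⟩ => hw ▸ hl.isPathWeight wt⟩

lemma gdist_eq_sSup {Q : Type*} [CompleteLattice Q] [Monoid Q] (E : V → V → Prop)
    (wt : V → V → Q) (u v : V) : gdist E wt u v = sSup {w | IsPathWeight E wt u v w} := by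
  rw [gdist, ← sSup_image]
  congr 1
  ext w
  simp [isPathWeight_iff]

lemma gdist_le_gdist {Q : Type*} [CompleteLattice Q] [Monoid Q] {E : V → V → Prop}
    {wt : V → V → Q} {E' : V' → V' → Prop} {wt' : V' → V' → Q} {u v : V} {u' v' : V'}
    (h : ∀ w, IsPathWeight E wt u v w → IsPathWeight E' wt' u' v' w) :
    gdist E wt u v ≤ gdist E' wt' u' v' := by
  rw [gdist_eq_sSup, gdist_eq_sSup]
  exact sSup_le_sSup h

lemma reflTransGen_fin_adjacent {n : ℕ} (a b : Fin n) :
    ReflTransGen (fun x y : Fin n => (x : ℕ) + 1 = y ∨ (y : ℕ) + 1 = x) a b := by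
  have val_succ : ∀ i m : Fin n, i < m → (i : ℕ) + 1 = Order.succ i := fun i m him =>
    Nat.covBy_iff_add_one_eq.1 <| Fin.covBy_iff.1 <|
      Order.covBy_succ_of_not_isMax (not_isMax_of_lt him)
  exact reflTransGen_of_succ _ (fun i hi => .inl (val_succ i b hi.2))
    (fun i hi => .inr (val_succ i a hi.2))

end PathWeights

section ProductGraph

open Sum

variable {M : Type*} [Monoid M] {n : ℕ} {E : Fin n → Fin n → Prop} {wt : Fin n → Fin n → M}

lemma isPathWeight_prodE_inl_inr (i a b : Fin n) :
    IsPathWeight (prodE E) (prodWt wt) (inl i, inr a) (inl i, inr b) 1 :=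
  .of_reflTransGen <| (reflTransGen_fin_adjacent a b).lift (fun k => (inl i, inr k))
    fun _ _ hxy => ⟨⟨rfl, hxy⟩, rfl⟩

lemma isPathWeight_prodE_inr_inl (j a b : Fin n) :
    IsPathWeight (prodE E) (prodWt wt) (inr a, inl j) (inr b, inl j) 1 :=
  .of_reflTransGen <| (reflTransGen_fin_adjacent a b).lift (fun k => (inr k, inl j))
    fun _ _ hxy => ⟨⟨rfl, hxy⟩, rfl⟩

lemma isPathWeight_prodE_of_edge {a b : Fin n} (hab : E a b) :
    IsPathWeight (prodE E) (prodWt wt) (inl a, inl a) (inl b, inl b) (wt a b) := by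
  let P := IsPathWeight (prodE E) (prodWt wt)
  have blue_out : P (inl a, inl a) (inl a, inr a) 1 := .single ⟨rfl, rfl, rfl⟩ rfl
  have red : P (inl a, inr b) (inl a, inl b) (wt a b) := .single ⟨hab, rfl, rfl⟩ rfl
  have to_red_end : P (inl a, inl a) (inl a, inl b) (wt a b) := by
    simpa using blue_out.trans ((isPathWeight_prodE_inl_inr a a b).trans red)
  by_cases hba : a = b
  · exact hba ▸ to_red_end
  have green : P (inl a, inl b) (inr a, inl b) 1 := .single ⟨hba, rfl, rfl⟩ rfl
  have blue_in : P (inr b, inl b) (inl b, inl b) 1 := .single ⟨rfl, rfl, rfl⟩ rfl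
  simpa using to_red_end.trans (green.trans ((isPathWeight_prodE_inr_inl b a b).trans blue_in))

def prodProj : ProdV n → Fin n
  | (inl i, inr _) => i
  | (_, inl j) => j
  | (inr i, inr _) => i

lemma isPathWeight_prodProj_of_prodE {a b : ProdV n} (hab : prodE E a b) :
    IsPathWeight E wt (prodProj a) (prodProj b) (prodWt wt a b) := by
  obtain ⟨a1 | a1, a2 | a2⟩ := a <;> obtain ⟨b1 | b1, b2 | b2⟩ := b <;> simp only [prodE] at hab
  all_goals first
    | exact hab.elim
    | (obtain ⟨rfl, -⟩ := hab; exact .refl _)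
    | (obtain ⟨rfl, rfl, rfl⟩ := hab; exact .refl _)
    | (obtain ⟨hE, rfl, rfl⟩ := hab; exact .single hE rfl)
    | (obtain ⟨-, rfl, rfl⟩ := hab; exact .refl _)

end ProductGraph

theorem stmt_15_general {Q : Type*} [CompleteLattice Q] [Monoid Q]
    (n : ℕ) (E : Fin n → Fin n → Prop) (wt : Fin n → Fin n → Q) (i j : Fin n) :
    gdist E wt i j =
      gdist (prodE E) (prodWt wt) (Sum.inl i, Sum.inl i) (Sum.inl j, Sum.inl j) := by
  apply le_antisymm
  · exact gdist_le_gdist fun _ h => h.map _ fun _ _ hab => isPathWeight_prodE_of_edge hab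
  · exact gdist_le_gdist fun _ h =>
      h.map prodProj fun _ _ hab => isPathWeight_prodProj_of_prodE hab

/-- For all nodes x_i, x_j of G:
d_G(x_i, x_j) = d_{G'}(⟨x_i, x_i⟩, ⟨x_j, x_j⟩), with weights in a unital quantale. -/
theorem stmt_15 {Q : Type*} [CompleteLattice Q] [Monoid Q]
    (hdl : ∀ (a : Q) (S : Set Q), a * sSup S = ⨆ s ∈ S, a * s)
    (hdr : ∀ (a : Q) (S : Set Q), sSup S * a = ⨆ s ∈ S, s * a)
    (n : ℕ) (hn : 1 ≤ n)
    (E : Fin n → Fin n → Prop) (wt : Fin n → Fin n → Q) (i j : Fin n) :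
    gdist E wt i j =
      gdist (prodE E) (prodWt wt) (Sum.inl i, Sum.inl i) (Sum.inl j, Sum.inl j) :=
  stmt_15_general n E wt i j
end
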